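/- For β = 0.85 (α = 1.7), the function x ↦ √(x^(−1.7) + 1 − 2^(1.85)) is nonnegative and interval-integrable on (0, π/8], and 2^(−1.35)·∫ from 0 to π/8 of √(x^(−1.7) + 1 − 2^(1.85)) dx > √(2^(−0.7)·(1 + (2√2/(1+√2))^(0.85) + (2√2/(√2−1))^(0.85))). In particular, for α = 1.7 the lower bound for v(π/2) along the right unstable branch of W^u(c₋) in the planar dihedral problem is strictly positive. -/
import Mathlib


open Real MeasureTheory

private lemma rpow_div_le_of_pow_le {x y : ℝ} (m n : ℕ) (hn : n ≠ 0) (hx : 0 ≤ x)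
    (hy : 0 ≤ y) (h : x ^ m ≤ y ^ n) : x ^ ((m : ℝ) / n) ≤ y := by
  refine le_of_pow_le_pow_left₀ hn hy ?_
  calc (x ^ ((m : ℝ) / n)) ^ n = x ^ (((m : ℝ) / n) * n) := by
        rw [← Real.rpow_natCast (x ^ ((m : ℝ) / n)) n, ← Real.rpow_mul hx]
    _ = x ^ m := by
        rw [div_mul_cancel₀ _ (by exact_mod_cast hn : (n : ℝ) ≠ 0), Real.rpow_natCast]
    _ ≤ y ^ n := h

private lemma le_rpow_div_of_pow_le {x y : ℝ} (m n : ℕ) (hn : n ≠ 0) (hx : 0 ≤ x)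
    (hy : 0 ≤ y) (h : y ^ n ≤ x ^ m) : y ≤ x ^ ((m : ℝ) / n) := by
  refine le_of_pow_le_pow_left₀ hn (Real.rpow_nonneg hx _) ?_
  calc y ^ n ≤ x ^ m := h
    _ = (x ^ ((m : ℝ) / n)) ^ n := by
        rw [← Real.rpow_natCast (x ^ ((m : ℝ) / n)) n, ← Real.rpow_mul hx,
          div_mul_cancel₀ _ (by exact_mod_cast hn : (n : ℝ) ≠ 0), Real.rpow_natCast]

set_option maxHeartbeats 1000000 in
/-- For `β = 0.85` (`α = 1.7`), the function `x ↦ √(x^(−1.7) + 1 − 2^(1.85))`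
is nonnegative and interval-integrable on `(0, π/8]`, and
`2^(−1.35)·∫₀^{π/8} √(x^(−1.7) + 1 − 2^(1.85)) dx >
 √(2^(−0.7)·(1 + (2√2/(1+√2))^(0.85) + (2√2/(√2−1))^(0.85)))`;
i.e. the lower bound for `v(π/2)` along the right unstable branch of
`W^u(c₋)` is strictly positive at `α = 1.7`. -/
theorem planar_lower_bound_positive_at_alpha_17 :
    (∀ x ∈ Set.Ioc (0:ℝ) (π/8),
        0 ≤ Real.sqrt (x ^ (-(1.7:ℝ)) + 1 - (2:ℝ) ^ (1.85:ℝ))) ∧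
    IntervalIntegrable (fun x : ℝ => Real.sqrt (x ^ (-(1.7:ℝ)) + 1 - (2:ℝ) ^ (1.85:ℝ)))
      volume 0 (π/8) ∧
    (2:ℝ) ^ (-(1.35:ℝ)) *
        (∫ x in (0:ℝ)..(π/8), Real.sqrt (x ^ (-(1.7:ℝ)) + 1 - (2:ℝ) ^ (1.85:ℝ))) >
      Real.sqrt ((2:ℝ) ^ (-(0.7:ℝ)) *
        (1 + (2 * Real.sqrt 2 / (1 + Real.sqrt 2)) ^ (0.85:ℝ) +
          (2 * Real.sqrt 2 / (Real.sqrt 2 - 1)) ^ (0.85:ℝ))) := by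
  have hpil : (0.3926:ℝ) ≤ π/8 := by
    have := Real.pi_gt_d6; linarith
  have hpiu : π/8 ≤ (0.3927:ℝ) := by
    have := Real.pi_lt_d6; linarith
  have hpi8 : (0:ℝ) ≤ π/8 := by linarith
  -- bound 2^1.85 ≤ 3.607
  have h185 : (2:ℝ) ^ (1.85:ℝ) ≤ 3.607 := by
    have : (1.85:ℝ) = (37:ℕ) / (20:ℕ) := by norm_num
    rw [this]
    exact rpow_div_le_of_pow_le 37 20 (by norm_num) (by norm_num) (by norm_num) (by norm_num)
  have h185' : (0:ℝ) ≤ (2:ℝ) ^ (1.85:ℝ) := Real.rpow_nonneg (by norm_num) _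
  -- pointwise lower bound: x^(-0.85) - 0.9 ≤ √(x^(-1.7) + 1 - 2^1.85) on [0, π/8]
  have key : ∀ x ∈ Set.Icc (0:ℝ) (π/8),
      x ^ (-(0.85:ℝ)) - 0.9 ≤ Real.sqrt (x ^ (-(1.7:ℝ)) + 1 - (2:ℝ) ^ (1.85:ℝ)) := by
    intro x hx
    rcases eq_or_lt_of_le hx.1 with h0 | h0
    · rw [← h0, Real.zero_rpow (by norm_num)]
      have := Real.sqrt_nonneg ((0:ℝ) ^ (-(1.7:ℝ)) + 1 - (2:ℝ) ^ (1.85:ℝ))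
      linarith
    · set y := x ^ (-(0.85:ℝ)) with hy
      have hy2 : y ^ 2 = x ^ (-(1.7:ℝ)) := by
        rw [hy, ← Real.rpow_natCast (x ^ (-(0.85:ℝ))) 2, ← Real.rpow_mul h0.le]
        norm_num
      have hylb : (2.2099:ℝ) ≤ y := by
        have h1 : x ^ (-(0.85:ℝ)) ≥ (0.3927:ℝ) ^ (-(0.85:ℝ)) :=
          Real.rpow_le_rpow_of_nonpos h0 (le_trans hx.2 hpiu) (by norm_num)
        have h2 : (2.2099:ℝ) ≤ (0.3927:ℝ) ^ (-(0.85:ℝ)) := by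
          have e : (0.3927:ℝ) ^ (-(0.85:ℝ)) = ((0.3927:ℝ)⁻¹) ^ (0.85:ℝ) := by
            rw [Real.rpow_neg (by norm_num), ← Real.inv_rpow (by norm_num)]
          rw [e]
          have : (0.85:ℝ) = (17:ℕ) / (20:ℕ) := by norm_num
          rw [this]
          refine le_rpow_div_of_pow_le 17 20 (by norm_num) (by norm_num) (by norm_num) ?_
          norm_num
        linarith
      have hsq : (y - 0.9) ^ 2 ≤ x ^ (-(1.7:ℝ)) + 1 - (2:ℝ) ^ (1.85:ℝ) := by
        rw [← hy2]; nlinarith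
      exact (Real.le_sqrt (by linarith) (le_trans (by positivity) hsq)).mpr hsq
  -- integrability of lower bound
  have gint : IntervalIntegrable (fun x : ℝ => x ^ (-(0.85:ℝ)) - 0.9) volume 0 (π/8) :=
    (intervalIntegral.intervalIntegrable_rpow' (by norm_num)).sub intervalIntegrable_const
  -- measurability of the integrand
  have fmeas : AEStronglyMeasurable
      (fun x : ℝ => Real.sqrt (x ^ (-(1.7:ℝ)) + 1 - (2:ℝ) ^ (1.85:ℝ)))
      (volume.restrict (Set.Ioc (0:ℝ) (π/8))) := by
    have hco : ContinuousOn
        (fun x : ℝ => Real.sqrt (x ^ (-(1.7:ℝ)) + 1 - (2:ℝ) ^ (1.85:ℝ)))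
        (Set.Ioc (0:ℝ) (π/8)) := by
      apply Real.continuous_sqrt.comp_continuousOn
      exact ((continuousOn_id.rpow_const fun x hx => Or.inl (ne_of_gt hx.1)).add
        continuousOn_const).sub continuousOn_const
    exact hco.aestronglyMeasurable measurableSet_Ioc
  -- integrability of the integrand
  have fint : IntervalIntegrable
      (fun x : ℝ => Real.sqrt (x ^ (-(1.7:ℝ)) + 1 - (2:ℝ) ^ (1.85:ℝ))) volume 0 (π/8) := by
    have hub : IntervalIntegrable (fun x : ℝ => x ^ (-(0.85:ℝ)) + 1) volume 0 (π/8) :=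
      (intervalIntegral.intervalIntegrable_rpow' (by norm_num)).add intervalIntegrable_const
    refine hub.mono_fun' ?_ ?_
    · rw [Set.uIoc_of_le hpi8]; exact fmeas
    rw [Set.uIoc_of_le hpi8]
    filter_upwards [ae_restrict_mem measurableSet_Ioc] with x hx
    have hx0 : (0:ℝ) < x := hx.1
    have hy2 : (x ^ (-(0.85:ℝ))) ^ 2 = x ^ (-(1.7:ℝ)) := by
      rw [← Real.rpow_natCast (x ^ (-(0.85:ℝ))) 2, ← Real.rpow_mul hx0.le]
      norm_num
    have hynn : (0:ℝ) ≤ x ^ (-(0.85:ℝ)) := Real.rpow_nonneg hx0.le _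
    have : Real.sqrt (x ^ (-(1.7:ℝ)) + 1 - (2:ℝ) ^ (1.85:ℝ)) ≤ x ^ (-(0.85:ℝ)) + 1 := by
      rw [Real.sqrt_le_iff]
      constructor
      · linarith
      · nlinarith
    simpa [Real.norm_eq_abs, abs_of_nonneg (Real.sqrt_nonneg _)] using this
  refine ⟨fun x _ => Real.sqrt_nonneg _, fint, ?_⟩
  -- lower bound for the integral
  have hmono : (∫ x in (0:ℝ)..(π/8), (x ^ (-(0.85:ℝ)) - 0.9))
      ≤ ∫ x in (0:ℝ)..(π/8), Real.sqrt (x ^ (-(1.7:ℝ)) + 1 - (2:ℝ) ^ (1.85:ℝ)) :=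
    intervalIntegral.integral_mono_on hpi8 gint fint key
  have hval : (∫ x in (0:ℝ)..(π/8), (x ^ (-(0.85:ℝ)) - 0.9))
      = (π/8) ^ (0.15:ℝ) / 0.15 - 0.9 * (π/8) := by
    rw [intervalIntegral.integral_sub (intervalIntegral.intervalIntegrable_rpow' (by norm_num))
      intervalIntegrable_const]
    rw [integral_rpow (Or.inl (by norm_num)), intervalIntegral.integral_const]
    rw [Real.zero_rpow (by norm_num)]
    norm_num
    ring
  -- bound (π/8)^0.15 from below
  have hk : (0.869:ℝ) ≤ (π/8) ^ (0.15:ℝ) := by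
    have h1 : (0.3926:ℝ) ^ (0.15:ℝ) ≤ (π/8) ^ (0.15:ℝ) :=
      Real.rpow_le_rpow (by norm_num) hpil (by norm_num)
    have h2 : (0.869:ℝ) ≤ (0.3926:ℝ) ^ (0.15:ℝ) := by
      have : (0.15:ℝ) = (3:ℕ) / (20:ℕ) := by norm_num
      rw [this]
      exact le_rpow_div_of_pow_le 3 20 (by norm_num) (by norm_num) (by norm_num) (by norm_num)
    linarith
  have hI : (5.4399:ℝ) ≤ ∫ x in (0:ℝ)..(π/8),
      Real.sqrt (x ^ (-(1.7:ℝ)) + 1 - (2:ℝ) ^ (1.85:ℝ)) := by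
    rw [hval] at hmono
    have hdiv : (π/8) ^ (0.15:ℝ) / 0.15 = (π/8) ^ (0.15:ℝ) * (20/3) := by ring
    rw [hdiv] at hmono
    nlinarith
  -- bound 2^(-1.35) from below
  have hm135 : (0.3922:ℝ) ≤ (2:ℝ) ^ (-(1.35:ℝ)) := by
    have e : (2:ℝ) ^ (-(1.35:ℝ)) = ((2:ℝ)⁻¹) ^ (1.35:ℝ) := by
      rw [Real.inv_rpow (by norm_num), ← Real.rpow_neg (by norm_num)]
    rw [e]
    have : (1.35:ℝ) = (27:ℕ) / (20:ℕ) := by norm_num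
    rw [this]
    exact le_rpow_div_of_pow_le 27 20 (by norm_num) (by norm_num) (by norm_num) (by norm_num)
  -- bound 2^(-0.7) from above
  have hm07 : (2:ℝ) ^ (-(0.7:ℝ)) ≤ 0.6156 := by
    have e : (2:ℝ) ^ (-(0.7:ℝ)) = ((2:ℝ)⁻¹) ^ (0.7:ℝ) := by
      rw [Real.inv_rpow (by norm_num), ← Real.rpow_neg (by norm_num)]
    rw [e]
    have : (0.7:ℝ) = (7:ℕ) / (10:ℕ) := by norm_num
    rw [this]
    exact rpow_div_le_of_pow_le 7 10 (by norm_num) (by norm_num) (by norm_num) (by norm_num)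
  have hm07' : (0:ℝ) ≤ (2:ℝ) ^ (-(0.7:ℝ)) := Real.rpow_nonneg (by norm_num) _
  -- sqrt 2 bounds
  have hs2u : Real.sqrt 2 ≤ 1.41422 :=
    Real.sqrt_le_iff.mpr ⟨by norm_num, by norm_num⟩
  have hs2l : (1.41421:ℝ) ≤ Real.sqrt 2 :=
    (Real.le_sqrt (by norm_num) (by norm_num)).mpr (by norm_num)
  -- bounds for a and b
  set a := 2 * Real.sqrt 2 / (1 + Real.sqrt 2) with ha
  set b := 2 * Real.sqrt 2 / (Real.sqrt 2 - 1) with hb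
  have hden1 : (0:ℝ) < 1 + Real.sqrt 2 := by linarith
  have hden2 : (0:ℝ) < Real.sqrt 2 - 1 := by linarith
  have ha1 : (1:ℝ) ≤ a := by
    rw [ha, le_div_iff₀ hden1]; linarith
  have hau : a ≤ 1.1716 := by
    rw [ha, div_le_iff₀ hden1]; linarith
  have hbnn : (0:ℝ) ≤ b := by
    rw [hb]; positivity
  have hbu : b ≤ 6.8285 := by
    rw [hb, div_le_iff₀ hden2]; linarith
  have hap : a ^ (0.85:ℝ) ≤ 1.1716 := by
    have h1 : a ^ (0.85:ℝ) ≤ a ^ (1:ℝ) :=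
      Real.rpow_le_rpow_of_exponent_le ha1 (by norm_num)
    rw [Real.rpow_one] at h1
    linarith
  have hbp : b ^ (0.85:ℝ) ≤ 5.125 := by
    have h1 : b ^ (0.85:ℝ) ≤ (6.8285:ℝ) ^ (0.85:ℝ) :=
      Real.rpow_le_rpow hbnn hbu (by norm_num)
    have h2 : (6.8285:ℝ) ^ (0.85:ℝ) ≤ 5.125 := by
      have : (0.85:ℝ) = (17:ℕ) / (20:ℕ) := by norm_num
      rw [this]
      exact rpow_div_le_of_pow_le 17 20 (by norm_num) (by norm_num) (by norm_num) (by norm_num)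
    linarith
  have hannp : (0:ℝ) ≤ a ^ (0.85:ℝ) := Real.rpow_nonneg (by rw [ha]; positivity) _
  have hbnnp : (0:ℝ) ≤ b ^ (0.85:ℝ) := Real.rpow_nonneg hbnn _
  -- RHS bound
  have hrhs : Real.sqrt ((2:ℝ) ^ (-(0.7:ℝ)) * (1 + a ^ (0.85:ℝ) + b ^ (0.85:ℝ))) ≤ 2.1194 := by
    rw [Real.sqrt_le_iff]
    constructor
    · norm_num
    · nlinarith
  -- LHS bound
  have hlhs : (2.1334:ℝ) ≤ (2:ℝ) ^ (-(1.35:ℝ)) *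
      (∫ x in (0:ℝ)..(π/8), Real.sqrt (x ^ (-(1.7:ℝ)) + 1 - (2:ℝ) ^ (1.85:ℝ))) := by
    have h1 : (0.3922:ℝ) * 5.4399 ≤ (2:ℝ) ^ (-(1.35:ℝ)) *
        (∫ x in (0:ℝ)..(π/8), Real.sqrt (x ^ (-(1.7:ℝ)) + 1 - (2:ℝ) ^ (1.85:ℝ))) :=
      mul_le_mul hm135 hI (by norm_num) (Real.rpow_nonneg (by norm_num) _)
    nlinarith
  linarith
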